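/- Assume P(lim_{|j|→∞} ‖Y_j‖ = 0) = 1. Let H be a nonnegative, shift invariant (H(Bx) = H(x)), α-homogeneous (H(tx) = t^α H(x) for all t > 0) measurable function on E. Then ϑ · E[H(Q)] = E[H(Θ) · 1{I(Θ) = 0}] = E[H(Θ) / Σ_{j∈ℤ} ‖Θ_j‖^α]; in particular, the three quantities E[H(Q)], E[H(Θ)·1{I(Θ)=0}], E[H(Θ)/Σ_{j∈ℤ}‖Θ_j‖^α] are simultaneously finite or infinite. -/

import Mathlib

/-!
Both identities come from the shift invariance of the tail measure `ν`.

Shifting the polar decomposition gives the time change formula `E[Φ(B^k Θ)] = E[Φ(Θ) ‖Θ_k‖^α]`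
for `0`-homogeneous `Φ`. Applied to `Φ = G · 1{I = 0}` with `G` `0`-homogeneous and shift
invariant, and summed over `k` (almost surely exactly one of the events `I(Θ) = -k` occurs), it
gives `E[G(Θ)] = E[G(Θ) 1{I(Θ) = 0} Σ_j ‖Θ_j‖^α]`. For `G = 1` this shows that `Σ_j ‖Θ_j‖^α` is
a.s. finite on `{I(Θ) = 0}`, and for `G = H / Σ_j ‖Θ_j‖^α` it is the second identity.

The first identity is a mass transport argument on `ν`: for shift equivariant random times `σ`
and `τ` (first exceedance of the level `1`, last exceedance, infargmax) and shift invariant `f`,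
`ν(f; σ = 0, τ exists) = ν(f; τ = 0, σ exists)`, since shifting time by `k` maps
`{σ = 0, τ = k}` onto `{σ = -k, τ = 0}`. Comparing the first and last exceedances gives
`ϑ = P(sup_{j ≤ -1} ‖Y_j‖ ≤ 1)`; comparing the first exceedance with the infargmax turns the
conditioning that defines `Q` into the event `{I(Y) = 0}`, on which `Y* = ‖Y_0‖` and `Y/Y* = Θ`.
-/

open MeasureTheory ProbabilityTheory Set Filter
open scoped ENNReal NNReal Topology

noncomputable section

/-- The iterated backshift operator: `(B^k x) j = x (j - k)`. -/
def backshift {V : Type*} (k : ℤ) (x : ℤ → V) : ℤ → V := fun j => x (j - k)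

/-- `InfargmaxAt x j` is the event `I(x) = j` for the infargmax functional `I`:
the first time the supremum of the norms is achieved is `j`, i.e.
`sup_{i<j} ‖x_i‖ < ‖x_j‖` and `sup_{i>j} ‖x_i‖ ≤ ‖x_j‖`.  (`I(x) ∈ ℤ` is then
expressed as `∃ j, InfargmaxAt x j`.) -/
def InfargmaxAt {V : Type*} [NormedAddCommGroup V] (x : ℤ → V) (j : ℤ) : Prop :=
  (⨆ i : {i : ℤ // i < j}, (‖x i.1‖₊ : ℝ≥0∞)) < (‖x j‖₊ : ℝ≥0∞) ∧
    (⨆ i : {i : ℤ // j < i}, (‖x i.1‖₊ : ℝ≥0∞)) ≤ (‖x j‖₊ : ℝ≥0∞)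

section Backshift

variable {V : Type*}

@[simp]
theorem backshift_apply (k : ℤ) (x : ℤ → V) (j : ℤ) : backshift k x j = x (j - k) := rfl

theorem backshift_add (k l : ℤ) (x : ℤ → V) :
    backshift (k + l) x = backshift k (backshift l x) := by
  funext j
  simp [sub_sub]

@[simp]
theorem backshift_zero (x : ℤ → V) : backshift 0 x = x := by
  funext j
  simp

theorem backshift_smul [SMul ℝ V] (k : ℤ) (c : ℝ) (x : ℤ → V) :
    backshift k (c • x) = c • backshift k x := rfl

theorem apply_backshift_of_apply_backshift_one {β : Type*} {f : (ℤ → V) → β}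
    (hf : ∀ x, f (backshift 1 x) = f x) (k : ℤ) (x : ℤ → V) : f (backshift k x) = f x := by
  induction k using Int.induction_on generalizing x with
  | zero => rw [backshift_zero]
  | succ n ih => rw [add_comm, backshift_add, hf, ih]
  | pred n ih => rw [← hf, ← backshift_add, show (1 : ℤ) + (-n - 1) = -n by ring, ih]

variable [MeasurableSpace V]

@[fun_prop]
theorem measurable_backshift (k : ℤ) : Measurable (backshift (V := V) k) :=
  measurable_pi_lambda _ fun _ => measurable_pi_apply _

def backshiftEquiv : (ℤ → V) ≃ᵐ (ℤ → V) where
  toFun := backshift 1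
  invFun := backshift (-1)
  left_inv x := by rw [← backshift_add, neg_add_cancel, backshift_zero]
  right_inv x := by rw [← backshift_add, add_neg_cancel, backshift_zero]
  measurable_toFun := measurable_backshift 1
  measurable_invFun := measurable_backshift (-1)

theorem measurePreserving_backshift {ν : Measure (ℤ → V)}
    (hν : MeasurePreserving (backshift 1) ν ν) (k : ℤ) :
    MeasurePreserving (backshift k) ν ν := by
  induction k using Int.induction_on with
  | zero =>
    have : backshift 0 = (id : (ℤ → V) → ℤ → V) := funext backshift_zero
    exact this ▸ MeasurePreserving.id ν
  | succ n ih =>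
    have : backshift ((n : ℤ) + 1) = backshift 1 ∘ backshift (V := V) n := by
      funext x; rw [add_comm, backshift_add]; rfl
    exact this ▸ hν.comp ih
  | pred n ih =>
    have : backshift (-(n : ℤ) - 1) = backshiftEquiv.symm ∘ backshift (V := V) (-n) := by
      funext x; rw [sub_eq_neg_add, backshift_add]; rfl
    exact this ▸ (MeasurePreserving.symm backshiftEquiv hν).comp ih

end Backshift

section Infargmax

variable {V : Type*} [NormedAddCommGroup V]

theorem infargmaxAt_backshift (k : ℤ) (x : ℤ → V) (j : ℤ) :
    InfargmaxAt (backshift k x) j ↔ InfargmaxAt x (j - k) := by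
  have shift (p q : ℤ → Prop) (h : ∀ i, p i ↔ q (i - k)) :
      (⨆ i : {i // p i}, (‖x (i.1 - k)‖₊ : ℝ≥0∞)) = ⨆ i : {i // q i}, (‖x i.1‖₊ : ℝ≥0∞) :=
    ((Equiv.subRight k).subtypeEquiv h).iSup_comp (g := fun i : {i // q i} => (‖x i.1‖₊ : ℝ≥0∞))
  simp only [InfargmaxAt, backshift_apply]
  rw [shift (· < j) (· < j - k) fun i => by simp,
    shift (j < ·) (j - k < ·) fun i => by simp]

theorem InfargmaxAt.nnnorm_le {x : ℤ → V} {j : ℤ} (h : InfargmaxAt x j) (i : ℤ) :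
    ‖x i‖₊ ≤ ‖x j‖₊ := by
  rw [← ENNReal.coe_le_coe]
  rcases lt_trichotomy i j with hij | rfl | hij
  · exact ((le_iSup (fun i : {i // i < j} => (‖x i.1‖₊ : ℝ≥0∞)) ⟨i, hij⟩).trans_lt h.1).le
  · exact le_rfl
  · exact (le_iSup (fun i : {i // j < i} => (‖x i.1‖₊ : ℝ≥0∞)) ⟨i, hij⟩).trans h.2

theorem InfargmaxAt.norm_le {x : ℤ → V} {j : ℤ} (h : InfargmaxAt x j) (i : ℤ) :
    ‖x i‖ ≤ ‖x j‖ :=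
  h.nnnorm_le i

theorem InfargmaxAt.apply_ne_zero {x : ℤ → V} {j : ℤ} (h : InfargmaxAt x j) : x j ≠ 0 := by
  simpa using (zero_le (α := ℝ≥0∞)).trans_lt h.1

theorem InfargmaxAt.unique {x : ℤ → V} {i j : ℤ} (hi : InfargmaxAt x i) (hj : InfargmaxAt x j) :
    i = j := by
  by_contra hne
  wlog hlt : i < j generalizing i j
  · exact this hj hi (Ne.symm hne) (by omega)
  have : (‖x i‖₊ : ℝ≥0∞) < ‖x j‖₊ :=
    (le_iSup (fun i : {i // i < j} => (‖x i.1‖₊ : ℝ≥0∞)) ⟨i, hlt⟩).trans_lt hj.1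
  exact this.not_ge (by exact_mod_cast hi.nnnorm_le j)

theorem infargmaxAt_smul [NormedSpace ℝ V] {c : ℝ} (hc : 0 < c) (x : ℤ → V) (j : ℤ) :
    InfargmaxAt (c • x) j ↔ InfargmaxAt x j := by
  have hc0 : (‖c‖₊ : ℝ≥0∞) ≠ 0 := by simpa using hc.ne'
  simp only [InfargmaxAt, Pi.smul_apply, nnnorm_smul, ENNReal.coe_mul, ← ENNReal.mul_iSup,
    ENNReal.mul_lt_mul_iff_right hc0 ENNReal.coe_ne_top,
    ENNReal.mul_le_mul_iff_right hc0 ENNReal.coe_ne_top]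

theorem infargmaxAt_inv_norm_smul [NormedSpace ℝ V] (x : ℤ → V) (j : ℤ) :
    InfargmaxAt (‖x j‖⁻¹ • x) j ↔ InfargmaxAt x j := by
  by_cases hx : x j = 0
  · refine iff_of_false (fun h => h.apply_ne_zero ?_) (fun h => h.apply_ne_zero hx)
    simp [hx]
  · exact infargmaxAt_smul (by positivity) x j

theorem InfargmaxAt.iSup_norm {x : ℤ → V} {j : ℤ} (h : InfargmaxAt x j) :
    ⨆ i, ‖x i‖ = ‖x j‖ :=
  le_antisymm (ciSup_le h.norm_le) (le_ciSup ⟨‖x j‖, forall_mem_range.mpr h.norm_le⟩ j)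

theorem measurableSet_infargmaxAt [MeasurableSpace V] [BorelSpace V] (j : ℤ) :
    MeasurableSet {x : ℤ → V | InfargmaxAt x j} := by
  simp only [InfargmaxAt, ofPred_and]
  exact (measurableSet_lt (by fun_prop) (by fun_prop)).inter
    (measurableSet_le (by fun_prop) (by fun_prop))

end Infargmax

theorem Filter.Tendsto.exists_isMaxOn_of_le {ι β : Type*} [LinearOrder β] [TopologicalSpace β]
    [OrderTopology β] {f : ι → β} {a : β} (hf : Tendsto f cofinite (𝓝 a)) (ha : ∀ i, a ≤ f i)
    {s : Set ι} (hs : s.Nonempty) : ∃ i ∈ s, IsMaxOn f s i := by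
  by_cases h : ∃ i ∈ s, a < f i
  · obtain ⟨i₁, hi₁s, hi₁⟩ := h
    have hfin : {i | ¬ f i < f i₁}.Finite :=
      eventually_cofinite.mp (hf.eventually (gt_mem_nhds hi₁))
    obtain ⟨i₀, ⟨hi₀s, -⟩, hmax⟩ := (s ∩ {i | ¬ f i < f i₁}).exists_max_image f
      (hfin.subset inter_subset_right) ⟨i₁, hi₁s, lt_irrefl _⟩
    refine ⟨i₀, hi₀s, fun i hi => ?_⟩
    by_cases hlt : f i < f i₁
    · exact hlt.le.trans (hmax i₁ ⟨hi₁s, lt_irrefl _⟩)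
    · exact hmax i ⟨hi, hlt⟩
  · push Not at h
    obtain ⟨i₀, hi₀⟩ := hs
    exact ⟨i₀, hi₀, fun i hi => (h i hi).trans (ha i₀)⟩

section VanishingAtInfinity

variable {V : Type*} [NormedAddCommGroup V] {x : ℤ → V}

theorem measurableSet_setOf_tendsto_norm_cofinite [MeasurableSpace V] [BorelSpace V] :
    MeasurableSet {x : ℤ → V | Tendsto (fun k => ‖x k‖) cofinite (𝓝 0)} := by
  rw [Int.cofinite_eq]
  exact measurableSet_tendsto _ fun k => by fun_prop

theorem tendsto_norm_const_smul_apply [NormedSpace ℝ V] (c : ℝ)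
    (hx : Tendsto (fun k => ‖x k‖) cofinite (𝓝 0)) :
    Tendsto (fun k => ‖(c • x) k‖) cofinite (𝓝 0) := by
  simpa [norm_smul] using hx.const_mul ‖c‖

theorem exists_infargmaxAt (hx : Tendsto (fun k => ‖x k‖) cofinite (𝓝 0)) (hx0 : x ≠ 0) :
    ∃ j, InfargmaxAt x j := by
  set g : ℤ → ℝ≥0∞ := fun i => ‖x i‖₊
  have hg : Tendsto g cofinite (𝓝 0) := by
    simpa only [ofReal_norm, enorm_eq_nnnorm, ENNReal.ofReal_zero] using ENNReal.tendsto_ofReal hx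
  obtain ⟨j₀, -, hj₀⟩ := hg.exists_isMaxOn_of_le (fun _ => zero_le) univ_nonempty
  obtain ⟨i, hi⟩ := Function.ne_iff.mp hx0
  have hb : 0 < g j₀ := (by simpa [g] using hi : 0 < g i).trans_le (hj₀ (mem_univ i))
  have hM : {i | g i = g j₀}.Finite :=
    (eventually_cofinite.mp (hg.eventually (gt_mem_nhds hb))).subset fun i hi => hi.not_lt
  obtain ⟨j, hj, hjmin⟩ := exists_min_image _ id hM ⟨j₀, rfl⟩
  refine ⟨j, ?_, iSup_le fun i => (hj₀ (mem_univ i.1)).trans hj.symm.le⟩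
  obtain ⟨i₀, hi₀, hi₀max⟩ := hg.exists_isMaxOn_of_le (fun _ => zero_le)
    (nonempty_Iio : (Iio j).Nonempty)
  calc ⨆ i : {i // i < j}, g i ≤ g i₀ := iSup_le fun i => hi₀max i.2
    _ < g j := hj ▸ lt_of_le_of_ne (hj₀ (mem_univ i₀)) fun h => (hjmin i₀ h).not_gt hi₀

def firstExceedance (j : ℤ) : Set (ℤ → V) := {x | 1 < ‖x j‖ ∧ ∀ i < j, ‖x i‖ ≤ 1}

def lastExceedance (j : ℤ) : Set (ℤ → V) := {x | 1 < ‖x j‖ ∧ ∀ i > j, ‖x i‖ ≤ 1}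

theorem finite_setOf_one_lt_norm (hx : Tendsto (fun k => ‖x k‖) cofinite (𝓝 0)) :
    {i | 1 < ‖x i‖}.Finite :=
  (eventually_cofinite.mp (hx.eventually (gt_mem_nhds one_pos))).subset fun _ hi =>
    not_lt.mpr hi.le

theorem exists_mem_firstExceedance (hx : Tendsto (fun k => ‖x k‖) cofinite (𝓝 0)) {i : ℤ}
    (hi : 1 < ‖x i‖) : ∃ j, x ∈ firstExceedance j := by
  obtain ⟨j, hj, hmin⟩ := exists_min_image _ id (finite_setOf_one_lt_norm hx) ⟨i, hi⟩
  exact ⟨j, hj, fun i hij => not_lt.mp fun h => (hmin i h).not_gt hij⟩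

theorem exists_mem_lastExceedance (hx : Tendsto (fun k => ‖x k‖) cofinite (𝓝 0)) {i : ℤ}
    (hi : 1 < ‖x i‖) : ∃ j, x ∈ lastExceedance j := by
  obtain ⟨j, hj, hmax⟩ := exists_max_image _ id (finite_setOf_one_lt_norm hx) ⟨i, hi⟩
  exact ⟨j, hj, fun i hij => not_lt.mp fun h => (hmax i h).not_gt hij⟩

theorem inter_one_lt_norm_zero_eq_lastExceedance :
    {y : ℤ → V | ∀ j : ℤ, 1 ≤ j → ‖y j‖ ≤ 1} ∩ {y | 1 < ‖y 0‖} = lastExceedance 0 := by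
  ext y
  simp only [lastExceedance, mem_inter_iff, mem_ofPred_eq, and_comm (a := ∀ _, _)]
  exact and_congr_right fun _ => forall_congr' fun j => imp_congr_left (by omega)

theorem inter_one_lt_norm_zero_eq_firstExceedance :
    {y : ℤ → V | ∀ j : ℤ, j ≤ -1 → ‖y j‖ ≤ 1} ∩ {y | 1 < ‖y 0‖} = firstExceedance 0 := by
  ext y
  simp only [firstExceedance, mem_inter_iff, mem_ofPred_eq, and_comm (a := ∀ _, _)]
  exact and_congr_right fun _ => forall_congr' fun j => imp_congr_left (by omega)

end VanishingAtInfinity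

section MassTransport

open Function

variable {V : Type*} [MeasurableSpace V]

/-- A shift equivariant random time: `x ∈ s j` reads "the distinguished time of `x` is `j`". -/
structure IsShiftEquivariantTime (s : ℤ → Set (ℤ → V)) : Prop where
  measurableSet : ∀ j, MeasurableSet (s j)
  preimage_backshift : ∀ k j, backshift k ⁻¹' s j = s (j - k)
  pairwise_disjoint : Pairwise (Disjoint on s)

theorem IsShiftEquivariantTime.setLIntegral_inter_iUnion_comm {s t : ℤ → Set (ℤ → V)}
    (hs : IsShiftEquivariantTime s) (ht : IsShiftEquivariantTime t) {ν : Measure (ℤ → V)}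
    (hν : ∀ k, MeasurePreserving (backshift k) ν ν) {f : (ℤ → V) → ℝ≥0∞} (hf : Measurable f)
    (hfs : ∀ k x, f (backshift k x) = f x) :
    ∫⁻ x in s 0 ∩ ⋃ j, t j, f x ∂ν = ∫⁻ x in t 0 ∩ ⋃ j, s j, f x ∂ν := by
  have decompose {a b : ℤ → Set (ℤ → V)} (ha : IsShiftEquivariantTime a)
      (hb : IsShiftEquivariantTime b) :
      ∫⁻ x in a 0 ∩ ⋃ j, b j, f x ∂ν = ∑' j, ∫⁻ x in a 0 ∩ b j, f x ∂ν := by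
    rw [inter_iUnion, lintegral_iUnion (fun j => (ha.measurableSet 0).inter (hb.measurableSet j))]
    exact hb.pairwise_disjoint.mono fun _ _ h => h.mono inter_subset_right inter_subset_right
  have shift (j : ℤ) : ∫⁻ x in s 0 ∩ t (-j), f x ∂ν = ∫⁻ x in t 0 ∩ s j, f x ∂ν := by
    rw [← (hν (-j)).setLIntegral_comp_preimage
        ((hs.measurableSet 0).inter (ht.measurableSet (-j))) hf,
      preimage_inter, hs.preimage_backshift, ht.preimage_backshift, zero_sub, neg_neg, sub_self,
      inter_comm]
    simp only [hfs]
  rw [decompose hs ht, decompose ht hs, ← (Equiv.neg ℤ).tsum_eq]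
  exact tsum_congr shift

variable [NormedAddCommGroup V] [BorelSpace V]

theorem isShiftEquivariantTime_infargmaxAt :
    IsShiftEquivariantTime fun j => {x : ℤ → V | InfargmaxAt x j} where
  measurableSet := measurableSet_infargmaxAt
  preimage_backshift k j := by ext x; exact infargmaxAt_backshift k x j
  pairwise_disjoint _ _ hij := disjoint_left.mpr fun _ hi hj => hij (hi.unique hj)

theorem isShiftEquivariantTime_firstExceedance :
    IsShiftEquivariantTime (firstExceedance (V := V)) where
  measurableSet j := by
    simp only [firstExceedance, ofPred_and, ofPred_forall]
    measurability
  preimage_backshift k j := by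
    ext x
    simp only [firstExceedance, mem_preimage, mem_ofPred_eq, backshift_apply]
    refine and_congr_right fun _ => ⟨fun h i hi => ?_, fun h i hi => h _ (by omega)⟩
    simpa using h (i + k) (by omega)
  pairwise_disjoint := (pairwise_disjoint_on _).mpr fun _ _ hij =>
    disjoint_left.mpr fun _ hi hj => (hj.2 _ hij).not_gt hi.1

theorem isShiftEquivariantTime_lastExceedance :
    IsShiftEquivariantTime (lastExceedance (V := V)) where
  measurableSet j := by
    simp only [lastExceedance, ofPred_and, ofPred_forall]
    measurability
  preimage_backshift k j := by
    ext x
    simp only [lastExceedance, mem_preimage, mem_ofPred_eq, backshift_apply]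
    refine and_congr_right fun _ => ⟨fun h i hi => ?_, fun h i hi => h _ (by omega)⟩
    simpa using h (i + k) (by omega)
  pairwise_disjoint := (pairwise_disjoint_on _).mpr fun _ _ hij =>
    disjoint_left.mpr fun _ hi hj => (hi.2 _ hij).not_gt hj.1

end MassTransport

section TailMeasure

variable {V : Type*} [NormedAddCommGroup V] [MeasurableSpace V] [BorelSpace V]
  {ν : Measure (ℤ → V)}

theorem measure_firstExceedance_zero_eq_lastExceedance
    (hν : ∀ k, MeasurePreserving (backshift k) ν ν)
    (hνZ : ∀ᵐ x ∂ν, x 0 ≠ 0 → Tendsto (fun k => ‖x k‖) cofinite (𝓝 0)) :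
    ν (firstExceedance 0) = ν (lastExceedance 0) := by
  have hfirst : (firstExceedance 0 ∩ ⋃ j, lastExceedance j : Set (ℤ → V)) =ᵐ[ν]
      firstExceedance 0 :=
    eventuallyEq_set.mpr <| hνZ.mono fun x hx => ⟨fun h => h.1, fun h => ⟨h, mem_iUnion.mpr <|
      exists_mem_lastExceedance (hx (norm_pos_iff.mp (one_pos.trans h.1))) h.1⟩⟩
  have hlast : (lastExceedance 0 ∩ ⋃ j, firstExceedance j : Set (ℤ → V)) =ᵐ[ν]
      lastExceedance 0 :=
    eventuallyEq_set.mpr <| hνZ.mono fun x hx => ⟨fun h => h.1, fun h => ⟨h, mem_iUnion.mpr <|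
      exists_mem_firstExceedance (hx (norm_pos_iff.mp (one_pos.trans h.1))) h.1⟩⟩
  rw [← measure_congr hfirst, ← measure_congr hlast, ← setLIntegral_one, ← setLIntegral_one]
  exact isShiftEquivariantTime_firstExceedance.setLIntegral_inter_iUnion_comm
    isShiftEquivariantTime_lastExceedance hν measurable_const fun _ _ => rfl

theorem setLIntegral_firstExceedance_zero
    (hν : ∀ k, MeasurePreserving (backshift k) ν ν)
    (hνZ : ∀ᵐ x ∂ν, x 0 ≠ 0 → Tendsto (fun k => ‖x k‖) cofinite (𝓝 0))
    {f : (ℤ → V) → ℝ≥0∞} (hf : Measurable f) (hfs : ∀ k x, f (backshift k x) = f x) :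
    ∫⁻ x in firstExceedance 0, f x ∂ν =
      ∫⁻ x in {x | InfargmaxAt x 0} ∩ {x | 1 < ‖x 0‖}, f x ∂ν := by
  have hfirst : (firstExceedance 0 ∩ ⋃ j, {x | InfargmaxAt x j} : Set (ℤ → V)) =ᵐ[ν]
      firstExceedance 0 := by
    refine eventuallyEq_set.mpr <| hνZ.mono fun x hx => ⟨fun h => h.1, fun h => ⟨h, ?_⟩⟩
    have hx0 : x 0 ≠ 0 := norm_pos_iff.mp (one_pos.trans h.1)
    exact mem_iUnion.mpr <| exists_infargmaxAt (hx hx0) fun h0 => hx0 (congrFun h0 0)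
  have hinf : ({x | InfargmaxAt x 0} ∩ ⋃ j, firstExceedance j : Set (ℤ → V)) =ᵐ[ν]
      ({x | InfargmaxAt x 0} ∩ {x | 1 < ‖x 0‖} : Set (ℤ → V)) := by
    refine eventuallyEq_set.mpr <| hνZ.mono fun x hx => ⟨fun ⟨hI, hE⟩ => ?_, fun ⟨hI, h0⟩ => ?_⟩
    · obtain ⟨j, hj⟩ := mem_iUnion.mp hE
      exact ⟨hI, hj.1.trans_le (hI.norm_le j)⟩
    · exact ⟨hI, mem_iUnion.mpr <|
        exists_mem_firstExceedance (hx (norm_pos_iff.mp (one_pos.trans h0))) h0⟩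
  rw [← setLIntegral_congr hfirst, ← setLIntegral_congr hinf]
  exact isShiftEquivariantTime_firstExceedance.setLIntegral_inter_iUnion_comm
    isShiftEquivariantTime_infargmaxAt hν hf hfs

theorem measure_forall_pos_norm_le_one_eq_forall_neg
    (hν : ∀ k, MeasurePreserving (backshift k) ν ν)
    (hνZ : ∀ᵐ x ∂ν, x 0 ≠ 0 → Tendsto (fun k => ‖x k‖) cofinite (𝓝 0))
    {Ω : Type*} [MeasurableSpace Ω] {P : Measure Ω} {Y : Ω → ℤ → V} (hY : Measurable Y)
    (hYlaw : P.map Y = ν.restrict {y | 1 < ‖y 0‖}) :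
    P {ω | ∀ j : ℤ, 1 ≤ j → ‖Y ω j‖ ≤ 1} = P {ω | ∀ j : ℤ, j ≤ -1 → ‖Y ω j‖ ≤ 1} := by
  have hlaw {S : Set (ℤ → V)} (hS : MeasurableSet S) : P (Y ⁻¹' S) = ν (S ∩ {y | 1 < ‖y 0‖}) := by
    rw [← Measure.map_apply hY hS, hYlaw, Measure.restrict_apply hS]
  change P (Y ⁻¹' {y | ∀ j : ℤ, 1 ≤ j → ‖y j‖ ≤ 1}) =
    P (Y ⁻¹' {y | ∀ j : ℤ, j ≤ -1 → ‖y j‖ ≤ 1})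
  rw [hlaw (by simp only [ofPred_forall]; measurability),
    hlaw (by simp only [ofPred_forall]; measurability), inter_one_lt_norm_zero_eq_lastExceedance,
    inter_one_lt_norm_zero_eq_firstExceedance,
    measure_firstExceedance_zero_eq_lastExceedance hν hνZ]

end TailMeasure

section SumRpow

variable {V : Type*} [NormedAddCommGroup V]

theorem tsum_nnnorm_smul_rpow [NormedSpace ℝ V] {r : ℝ} (hr : 0 < r) (α : ℝ) (y : ℤ → V) :
    ∑' j, (‖(r • y) j‖₊ : ℝ≥0∞) ^ α = ENNReal.ofReal (r ^ α) * ∑' j, (‖y j‖₊ : ℝ≥0∞) ^ α := by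
  rw [← ENNReal.tsum_mul_left]
  refine tsum_congr fun j => ?_
  rw [Pi.smul_apply, nnnorm_smul, ENNReal.coe_mul,
    ENNReal.mul_rpow_of_ne_top ENNReal.coe_ne_top ENNReal.coe_ne_top, ← enorm_eq_nnnorm,
    Real.enorm_eq_ofReal hr.le, ENNReal.ofReal_rpow_of_pos hr]

theorem tsum_nnnorm_backshift_rpow (k : ℤ) (α : ℝ) (y : ℤ → V) :
    ∑' j, (‖backshift k y j‖₊ : ℝ≥0∞) ^ α = ∑' j, (‖y j‖₊ : ℝ≥0∞) ^ α :=
  (Equiv.subRight k).tsum_eq fun j => (‖y j‖₊ : ℝ≥0∞) ^ α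

end SumRpow

theorem lintegral_Ioi_mul_rpow_neg_sub_one {α b : ℝ} (hα : 0 < α) (hb : 0 < b) :
    ∫⁻ r in Ioi b, ENNReal.ofReal (α * r ^ (-α - 1)) = ENNReal.ofReal (b ^ (-α)) := by
  have hlt : -α - 1 < -1 := by linarith
  rw [← ofReal_integral_eq_lintegral_ofReal ((integrableOn_Ioi_rpow_of_lt hlt hb).const_mul α)
    ((ae_restrict_iff' measurableSet_Ioi).mpr (ae_of_all _ fun r (hr : b < r) => by
      have := hb.trans hr; positivity)),
    integral_const_mul, integral_Ioi_rpow_of_lt hlt hb, sub_add_cancel]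
  congr 1
  field_simp

theorem lintegral_Ioi_ite_one_lt_mul {α c : ℝ} (hα : 0 < α) (hc : 0 ≤ c) :
    ∫⁻ r in Ioi 0, (if 1 < r * c then ENNReal.ofReal (α * r ^ (-α - 1)) else 0) =
      ENNReal.ofReal (c ^ α) := by
  rcases hc.eq_or_lt with rfl | hc
  · simp [Real.zero_rpow hα.ne', (zero_lt_one' ℝ).not_gt]
  have hind : (fun r : ℝ => if 1 < r * c then ENNReal.ofReal (α * r ^ (-α - 1)) else 0) =
      (Ioi c⁻¹).indicator fun r => ENNReal.ofReal (α * r ^ (-α - 1)) :=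
    funext fun r => by simp [indicator_apply, inv_lt_iff_one_lt_mul₀ hc]
  rw [hind, lintegral_indicator measurableSet_Ioi, Measure.restrict_restrict measurableSet_Ioi,
    inter_eq_left.mpr (Ioi_subset_Ioi (inv_pos.2 hc).le),
    lintegral_Ioi_mul_rpow_neg_sub_one hα (inv_pos.2 hc), Real.inv_rpow hc.le, Real.rpow_neg hc.le,
    inv_inv]

section TimeChange

variable {V : Type*} [NormedAddCommGroup V] [NormedSpace ℝ V] [MeasurableSpace V] [BorelSpace V]
  {Ω : Type*} [MeasurableSpace Ω]

def HasPolarDecomposition (ν : Measure (ℤ → V)) (P : Measure Ω) (Θ : Ω → ℤ → V) (α : ℝ) :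
    Prop :=
  ∀ H : (ℤ → V) → ℝ≥0∞, Measurable H →
    ∫⁻ y in {y : ℤ → V | y 0 ≠ 0}, H y ∂ν
      = ∫⁻ r in Ioi (0 : ℝ), (∫⁻ ω, H (r • Θ ω) ∂P) * ENNReal.ofReal (α * r ^ (-α - 1))

def SatisfiesTimeChange (P : Measure Ω) (Θ : Ω → ℤ → V) (α : ℝ) : Prop :=
  ∀ (k : ℤ) (Φ : (ℤ → V) → ℝ≥0∞), Measurable Φ → (∀ r : ℝ, 0 < r → ∀ y, Φ (r • y) = Φ y) →
    (∀ y, y 0 = 0 → Φ y = 0) →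
    ∫⁻ ω, Φ (backshift k (Θ ω)) ∂P = ∫⁻ ω, Φ (Θ ω) * (‖Θ ω k‖₊ : ℝ≥0∞) ^ α ∂P

variable {ν : Measure (ℤ → V)} {P : Measure Ω} [SFinite P] {Θ : Ω → ℤ → V} {α : ℝ}

theorem HasPolarDecomposition.setLIntegral_one_lt_norm (h : HasPolarDecomposition ν P Θ α)
    (hα : 0 < α) (hΘ : Measurable Θ) (k : ℤ) {Φ : (ℤ → V) → ℝ≥0∞} (hΦ : Measurable Φ)
    (hΦhom : ∀ r : ℝ, 0 < r → ∀ y, Φ (r • y) = Φ y) :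
    ∫⁻ y in {y | y 0 ≠ 0} ∩ {y | 1 < ‖y k‖}, Φ y ∂ν =
      ∫⁻ ω, Φ (Θ ω) * (‖Θ ω k‖₊ : ℝ≥0∞) ^ α ∂P := by
  set w : ℝ → ℝ≥0∞ := fun r => ENNReal.ofReal (α * r ^ (-α - 1))
  have hk : MeasurableSet {y : ℤ → V | 1 < ‖y k‖} := measurableSet_lt measurable_const (by fun_prop)
  rw [inter_comm, ← Measure.restrict_restrict hk, ← lintegral_indicator hk, h _ (hΦ.indicator hk)]
  calc ∫⁻ r in Ioi 0, (∫⁻ ω, {y | 1 < ‖y k‖}.indicator Φ (r • Θ ω) ∂P) * w r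
      = ∫⁻ r in Ioi 0, ∫⁻ ω, Φ (Θ ω) * (if 1 < r * ‖Θ ω k‖ then w r else 0) ∂P := by
        refine setLIntegral_congr_fun measurableSet_Ioi fun r (hr : 0 < r) => ?_
        rw [← lintegral_mul_const' _ _ ENNReal.ofReal_ne_top]
        refine lintegral_congr fun ω => ?_
        have hmem : r • Θ ω ∈ {y : ℤ → V | 1 < ‖y k‖} ↔ 1 < r * ‖Θ ω k‖ := by
          simp [norm_smul, abs_of_pos hr]
        by_cases hlt : 1 < r * ‖Θ ω k‖
        · rw [indicator_of_mem (hmem.2 hlt), if_pos hlt, hΦhom r hr]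
        · rw [indicator_of_notMem (mt hmem.1 hlt), if_neg hlt, zero_mul, mul_zero]
    _ = ∫⁻ ω, (∫⁻ r in Ioi 0, Φ (Θ ω) * (if 1 < r * ‖Θ ω k‖ then w r else 0)) ∂P :=
        lintegral_lintegral_swap ((hΦ.comp (hΘ.comp measurable_snd)).mul
          (Measurable.ite (measurableSet_lt measurable_const (by fun_prop)) (by fun_prop)
            measurable_const)).aemeasurable
    _ = ∫⁻ ω, Φ (Θ ω) * (‖Θ ω k‖₊ : ℝ≥0∞) ^ α ∂P := by
        refine lintegral_congr fun ω => ?_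
        rw [lintegral_const_mul _ (Measurable.ite (measurableSet_lt measurable_const
            (by fun_prop)) (by fun_prop) measurable_const),
          lintegral_Ioi_ite_one_lt_mul hα (norm_nonneg _),
          ← ENNReal.ofReal_rpow_of_nonneg (norm_nonneg _) hα.le, ofReal_norm, enorm_eq_nnnorm]

theorem HasPolarDecomposition.satisfiesTimeChange (h : HasPolarDecomposition ν P Θ α)
    (hα : 0 < α) (hΘ : Measurable Θ) (hν : ∀ k, MeasurePreserving (backshift k) ν ν)
    (hΘ0 : ∀ᵐ ω ∂P, ‖Θ ω 0‖ = 1) : SatisfiesTimeChange P Θ α := by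
  intro k Φ hΦ hΦhom hΦ0
  have hne : MeasurableSet {y : ℤ → V | y 0 ≠ 0} :=
    ((measurableSet_singleton 0).preimage (measurable_pi_apply 0)).compl
  have hk : MeasurableSet {y : ℤ → V | 1 < ‖y k‖} := measurableSet_lt measurable_const (by fun_prop)
  calc ∫⁻ ω, Φ (backshift k (Θ ω)) ∂P
      = ∫⁻ ω, Φ (backshift k (Θ ω)) * (‖Θ ω 0‖₊ : ℝ≥0∞) ^ α ∂P :=
        lintegral_congr_ae <| hΘ0.mono fun ω hω => by simp [show ‖Θ ω 0‖₊ = 1 from NNReal.eq hω]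
    _ = ∫⁻ y in {y | y 0 ≠ 0} ∩ {y | 1 < ‖y 0‖}, Φ (backshift k y) ∂ν :=
        (h.setLIntegral_one_lt_norm hα hΘ 0 (hΦ.comp (measurable_backshift k))
          fun r hr y => by simp only [Function.comp_apply, backshift_smul, hΦhom r hr]).symm
    _ = ∫⁻ y in {y | 1 < ‖y k‖}, Φ y ∂ν := by
        have hsub : {y : ℤ → V | 1 < ‖y 0‖} ⊆ {y | y 0 ≠ 0} := fun y hy =>
          norm_pos_iff.mp (one_pos.trans hy)
        rw [inter_eq_right.mpr hsub,
          ← (hν k).setLIntegral_comp_preimage hk hΦ]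
        simp
    _ = ∫⁻ y in {y | y 0 ≠ 0} ∩ {y | 1 < ‖y k‖}, Φ y ∂ν := by
        have hsupp : Function.support Φ ⊆ {y | y 0 ≠ 0} := fun y hy h0 => hy (hΦ0 y h0)
        rw [← Measure.restrict_restrict hne, ← lintegral_indicator hne,
          indicator_eq_self.mpr hsupp]
    _ = ∫⁻ ω, Φ (Θ ω) * (‖Θ ω k‖₊ : ℝ≥0∞) ^ α ∂P := h.setLIntegral_one_lt_norm hα hΘ k hΦ hΦhom

end TimeChange

theorem HasPolarDecomposition.ae_of_ae {V Ω : Type*} [NormedAddCommGroup V] [NormedSpace ℝ V]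
    [MeasurableSpace V] [BorelSpace V] [MeasurableSpace Ω] {ν : Measure (ℤ → V)} {P : Measure Ω}
    {Θ : Ω → ℤ → V} {α : ℝ} (h : HasPolarDecomposition ν P Θ α) {p : (ℤ → V) → Prop}
    (hp : MeasurableSet {y | p y}) (hphom : ∀ r : ℝ, 0 < r → ∀ y, p y → p (r • y))
    (hΘp : ∀ᵐ ω ∂P, p (Θ ω)) : ∀ᵐ y ∂ν, y 0 ≠ 0 → p y := by
  have hne : MeasurableSet {y : ℤ → V | y 0 ≠ 0} :=
    ((measurableSet_singleton 0).preimage (measurable_pi_apply 0)).compl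
  have hnp : MeasurableSet {y | ¬p y} := hp.compl
  refine (ae_restrict_iff' hne).mp (ae_iff.mpr ?_)
  rw [← lintegral_indicator_one hnp, h _ (measurable_one.indicator hnp)]
  refine (setLIntegral_congr_fun measurableSet_Ioi fun r (hr : 0 < r) => ?_).trans lintegral_zero
  rw [lintegral_congr_ae (g := fun _ => 0) (hΘp.mono fun ω hω => indicator_of_notMem
    (not_not.mpr (hphom r hr _ hω)) 1), lintegral_zero, zero_mul]

section LawTransfer

variable {Ω E : Type*} [MeasurableSpace Ω] [MeasurableSpace E]

theorem setLIntegral_comp_of_map_eq_restrict {P : Measure Ω} {ν : Measure E} {Y : Ω → E}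
    (hY : Measurable Y) {U : Set E} (hlaw : P.map Y = ν.restrict U) {S : Set E}
    (hS : MeasurableSet S) {G : E → ℝ≥0∞} (hG : Measurable G) :
    ∫⁻ ω in Y ⁻¹' S, G (Y ω) ∂P = ∫⁻ y in S ∩ U, G y ∂ν := by
  rw [← setLIntegral_map hS hG hY, hlaw, Measure.restrict_restrict hS]

variable {Ω' : Type*} [MeasurableSpace Ω'] {P : Measure Ω} {P' : Measure Ω'}
  [IsProbabilityMeasure P'] {Q : Ω' → E} {g : Ω → E} {A : Set Ω}

theorem measure_ne_zero_of_map_eq_map_cond (hQ : Measurable Q) (hlaw : P'.map Q = P[|A].map g) :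
    P A ≠ 0 := by
  intro hA
  rw [cond_eq_zero.mpr (Or.inr hA), Measure.map_zero, Measure.map_eq_zero_iff hQ.aemeasurable]
    at hlaw
  exact IsProbabilityMeasure.ne_zero P' hlaw

theorem measure_mul_lintegral_of_map_eq_map_cond [IsFiniteMeasure P] (hQ : Measurable Q)
    (hg : Measurable g) (hlaw : P'.map Q = P[|A].map g) {H : E → ℝ≥0∞} (hH : Measurable H) :
    P A * ∫⁻ ω', H (Q ω') ∂P' = ∫⁻ ω in A, H (g ω) ∂P := by
  rw [← lintegral_map hH hQ, hlaw, lintegral_map hH hg, ProbabilityTheory.cond,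
    lintegral_smul_measure, smul_eq_mul, ← mul_assoc,
    ENNReal.mul_inv_cancel (measure_ne_zero_of_map_eq_map_cond hQ hlaw) (measure_ne_top P A),
    one_mul]

end LawTransfer

section Anchoring

variable {V : Type*} [NormedAddCommGroup V] [NormedSpace ℝ V] [MeasurableSpace V] [BorelSpace V]
  {Ω : Type*} [MeasurableSpace Ω] {P : Measure Ω} {Θ : Ω → ℤ → V} {α : ℝ}

theorem SatisfiesTimeChange.setLIntegral_infargmaxAt_neg (h : SatisfiesTimeChange P Θ α)
    (hΘ : Measurable Θ) (k : ℤ) {G : (ℤ → V) → ℝ≥0∞} (hG : Measurable G)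
    (hGhom : ∀ r : ℝ, 0 < r → ∀ y, G (r • y) = G y) (hGs : ∀ k y, G (backshift k y) = G y) :
    ∫⁻ ω in {ω | InfargmaxAt (Θ ω) (-k)}, G (Θ ω) ∂P =
      ∫⁻ ω in {ω | InfargmaxAt (Θ ω) 0}, G (Θ ω) * (‖Θ ω k‖₊ : ℝ≥0∞) ^ α ∂P := by
  classical
  have hI (j : ℤ) : MeasurableSet {ω | InfargmaxAt (Θ ω) j} :=
    (measurableSet_infargmaxAt j).preimage hΘ
  have key := h k ({y | InfargmaxAt y 0}.indicator G) (hG.indicator (measurableSet_infargmaxAt 0))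
    (fun r hr y => by
      simp only [Set.indicator_apply, Set.mem_ofPred_eq, infargmaxAt_smul hr, hGhom r hr])
    (fun y hy => indicator_of_notMem (fun hI => hI.apply_ne_zero hy) G)
  rw [← lintegral_indicator (hI _), ← lintegral_indicator (hI _)]
  convert key using 1 <;> refine lintegral_congr fun ω => ?_
  · simp only [Set.indicator_apply, Set.mem_ofPred_eq, infargmaxAt_backshift, zero_sub, hGs]
  · simp only [Set.indicator_apply, Set.mem_ofPred_eq, ite_mul, zero_mul]

theorem SatisfiesTimeChange.lintegral_eq_setLIntegral_infargmaxAt_mul_tsum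
    (h : SatisfiesTimeChange P Θ α) (hΘ : Measurable Θ)
    (hΘI : ∀ᵐ ω ∂P, ∃ j, InfargmaxAt (Θ ω) j) {G : (ℤ → V) → ℝ≥0∞} (hG : Measurable G)
    (hGhom : ∀ r : ℝ, 0 < r → ∀ y, G (r • y) = G y) (hGs : ∀ k y, G (backshift k y) = G y) :
    ∫⁻ ω, G (Θ ω) ∂P =
      ∫⁻ ω in {ω | InfargmaxAt (Θ ω) 0}, G (Θ ω) * ∑' j, (‖Θ ω j‖₊ : ℝ≥0∞) ^ α ∂P := by
  have hI (j : ℤ) : MeasurableSet {ω | InfargmaxAt (Θ ω) j} :=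
    (measurableSet_infargmaxAt j).preimage hΘ
  have hcover : (⋃ k : ℤ, {ω | InfargmaxAt (Θ ω) (-k)}) =ᵐ[P] (univ : Set Ω) :=
    eventuallyEq_set.mpr <| hΘI.mono fun ω ⟨j, hj⟩ =>
      iff_of_true (mem_iUnion.mpr ⟨-j, by rwa [neg_neg]⟩) (mem_univ ω)
  calc ∫⁻ ω, G (Θ ω) ∂P = ∫⁻ ω in ⋃ k : ℤ, {ω | InfargmaxAt (Θ ω) (-k)}, G (Θ ω) ∂P := by
        rw [setLIntegral_congr hcover, setLIntegral_univ]
    _ = ∑' k : ℤ, ∫⁻ ω in {ω | InfargmaxAt (Θ ω) 0}, G (Θ ω) * (‖Θ ω k‖₊ : ℝ≥0∞) ^ α ∂P := by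
        rw [lintegral_iUnion (fun k => hI _) fun i j hij => disjoint_left.mpr fun ω hi hj =>
          hij (neg_injective (hi.unique hj))]
        exact tsum_congr fun k => h.setLIntegral_infargmaxAt_neg hΘ k hG hGhom hGs
    _ = ∫⁻ ω in {ω | InfargmaxAt (Θ ω) 0}, G (Θ ω) * ∑' j, (‖Θ ω j‖₊ : ℝ≥0∞) ^ α ∂P := by
        rw [← lintegral_tsum fun k => by fun_prop]
        simp_rw [ENNReal.tsum_mul_left]

theorem SatisfiesTimeChange.setLIntegral_infargmaxAt_eq_lintegral_div [IsFiniteMeasure P]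
    (h : SatisfiesTimeChange P Θ α) (hΘ : Measurable Θ)
    (hΘI : ∀ᵐ ω ∂P, ∃ j, InfargmaxAt (Θ ω) j) {H : (ℤ → V) → ℝ≥0∞} (hH : Measurable H)
    (hHhom : ∀ t : ℝ, 0 < t → ∀ x, H (t • x) = ENNReal.ofReal (t ^ α) * H x)
    (hHs : ∀ k x, H (backshift k x) = H x) :
    ∫⁻ ω in {ω | InfargmaxAt (Θ ω) 0}, H (Θ ω) ∂P =
      ∫⁻ ω, H (Θ ω) / ∑' j, (‖Θ ω j‖₊ : ℝ≥0∞) ^ α ∂P := by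
  set S : (ℤ → V) → ℝ≥0∞ := fun y => ∑' j, (‖y j‖₊ : ℝ≥0∞) ^ α
  have hS : Measurable S := Measurable.tsum fun j => by fun_prop
  have hI0 : MeasurableSet {ω | InfargmaxAt (Θ ω) 0} := (measurableSet_infargmaxAt 0).preimage hΘ
  have hSfin : ∀ᵐ ω ∂P, InfargmaxAt (Θ ω) 0 → S (Θ ω) ≠ ∞ := by
    have hone := h.lintegral_eq_setLIntegral_infargmaxAt_mul_tsum hΘ hΘI (G := 1)
      measurable_const (fun _ _ _ => rfl) fun _ _ => rfl
    simp only [Pi.one_apply, one_mul, lintegral_one] at hone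
    refine (ae_restrict_iff' hI0).mp ((ae_lt_top' (hS.comp hΘ).aemeasurable ?_).mono
      fun ω hω => hω.ne)
    exact hone ▸ measure_ne_top P univ
  rw [h.lintegral_eq_setLIntegral_infargmaxAt_mul_tsum hΘ hΘI (G := fun y => H y / S y)
    (hH.div hS) (fun r hr y => ?_) fun k y => ?_]
  · refine setLIntegral_congr_fun_ae hI0 (hSfin.mono fun ω hfin hω => ?_)
    have hS0 : S (Θ ω) ≠ 0 := ((ENNReal.rpow_pos (p := α) (ENNReal.coe_pos.mpr
      (nnnorm_pos.mpr hω.apply_ne_zero)) ENNReal.coe_ne_top).trans_le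
        (ENNReal.le_tsum (f := fun j => (‖Θ ω j‖₊ : ℝ≥0∞) ^ α) 0)).ne'
    exact (ENNReal.div_mul_cancel hS0 (hfin hω)).symm
  · have hr' : ENNReal.ofReal (r ^ α) ≠ 0 :=
      (ENNReal.ofReal_pos.mpr (Real.rpow_pos_of_pos hr α)).ne'
    simp only [S, hHhom r hr, tsum_nnnorm_smul_rpow hr,
      ENNReal.mul_div_mul_left _ _ hr' ENNReal.ofReal_ne_top]
  · simp only [S, hHs, tsum_nnnorm_backshift_rpow]

end Anchoring

section TailProcess

variable {V : Type*} [NormedAddCommGroup V] [NormedSpace ℝ V] [MeasurableSpace V] [BorelSpace V]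
  {ν : Measure (ℤ → V)} {Ω : Type*} [MeasurableSpace Ω] {P : Measure Ω} {Y : Ω → ℤ → V}

theorem measurable_inv_norm_smul (i : ℤ) : Measurable fun y : ℤ → V => ‖y i‖⁻¹ • y :=
  measurable_pi_lambda _ fun j => (measurable_pi_apply i).norm.inv.smul (measurable_pi_apply j)

theorem measurable_inv_iSup_norm_smul : Measurable fun y : ℤ → V => (⨆ j, ‖y j‖)⁻¹ • y :=
  measurable_pi_lambda _ fun i =>
    ((Measurable.iSup (f := fun j (y : ℤ → V) => ‖y j‖) fun j => by fun_prop).inv).smul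
      (measurable_pi_apply i)

theorem ae_norm_apply_zero_eq_one (hY : Measurable Y)
    (hYlaw : P.map Y = ν.restrict {y | 1 < ‖y 0‖}) {Θ : Ω → ℤ → V}
    (hΘdef : ∀ ω, Θ ω = ‖Y ω 0‖⁻¹ • Y ω) : ∀ᵐ ω ∂P, ‖Θ ω 0‖ = 1 := by
  have hU : MeasurableSet {y : ℤ → V | 1 < ‖y 0‖} := measurableSet_lt measurable_const (by fun_prop)
  filter_upwards [(ae_map_iff hY.aemeasurable hU).mp (hYlaw ▸ ae_restrict_mem hU)] with ω h
  rw [hΘdef, Pi.smul_apply, norm_smul, norm_inv, norm_norm, inv_mul_cancel₀ (one_pos.trans h).ne']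

theorem ae_tendsto_norm_of_measure_eq_one [IsProbabilityMeasure P] (hY : Measurable Y)
    (hY0 : P {ω | Tendsto (fun k => ‖Y ω k‖) cofinite (𝓝 0)} = 1) {Θ : Ω → ℤ → V}
    (hΘdef : ∀ ω, Θ ω = ‖Y ω 0‖⁻¹ • Y ω) :
    ∀ᵐ ω ∂P, Tendsto (fun k => ‖Θ ω k‖) cofinite (𝓝 0) :=
  ((ae_iff_measure_eq (measurableSet_setOf_tendsto_norm_cofinite.preimage hY).nullMeasurableSet
    ).mpr (hY0.trans measure_univ.symm)).mono fun ω h =>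
      hΘdef ω ▸ tendsto_norm_const_smul_apply _ h

theorem setLIntegral_inv_iSup_smul_eq_setLIntegral_infargmaxAt
    (hν : ∀ k, MeasurePreserving (backshift k) ν ν)
    (hνZ : ∀ᵐ x ∂ν, x 0 ≠ 0 → Tendsto (fun k => ‖x k‖) cofinite (𝓝 0))
    (hY : Measurable Y) (hYlaw : P.map Y = ν.restrict {y | 1 < ‖y 0‖}) {Θ : Ω → ℤ → V}
    (hΘdef : ∀ ω, Θ ω = ‖Y ω 0‖⁻¹ • Y ω) {H : (ℤ → V) → ℝ≥0∞} (hH : Measurable H)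
    (hHs : ∀ k x, H (backshift k x) = H x) :
    ∫⁻ ω in {ω | ∀ j : ℤ, j ≤ -1 → ‖Y ω j‖ ≤ 1}, H ((⨆ j, ‖Y ω j‖)⁻¹ • Y ω) ∂P =
      ∫⁻ ω in {ω | InfargmaxAt (Θ ω) 0}, H (Θ ω) ∂P := by
  have hU : MeasurableSet {y : ℤ → V | 1 < ‖y 0‖} := measurableSet_lt measurable_const (by fun_prop)
  have hA : MeasurableSet {y : ℤ → V | ∀ j : ℤ, j ≤ -1 → ‖y j‖ ≤ 1} := by
    simp only [ofPred_forall]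
    measurability
  have hsups (k : ℤ) (y : ℤ → V) : ⨆ j, ‖backshift k y j‖ = ⨆ j, ‖y j‖ :=
    (Equiv.subRight k).iSup_comp (g := fun j => ‖y j‖)
  calc ∫⁻ ω in {ω | ∀ j : ℤ, j ≤ -1 → ‖Y ω j‖ ≤ 1}, H ((⨆ j, ‖Y ω j‖)⁻¹ • Y ω) ∂P
      = ∫⁻ y in firstExceedance 0, H ((⨆ j, ‖y j‖)⁻¹ • y) ∂ν := by
        rw [← inter_one_lt_norm_zero_eq_firstExceedance]
        exact setLIntegral_comp_of_map_eq_restrict hY hYlaw hA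
          (hH.comp measurable_inv_iSup_norm_smul)
    _ = ∫⁻ y in {y | InfargmaxAt y 0} ∩ {y | 1 < ‖y 0‖}, H ((⨆ j, ‖y j‖)⁻¹ • y) ∂ν :=
        setLIntegral_firstExceedance_zero hν hνZ (hH.comp measurable_inv_iSup_norm_smul)
          fun k y => by simp only [hsups, ← backshift_smul, hHs]
    _ = ∫⁻ y in {y | InfargmaxAt y 0} ∩ {y | 1 < ‖y 0‖}, H (‖y 0‖⁻¹ • y) ∂ν :=
        setLIntegral_congr_fun ((measurableSet_infargmaxAt 0).inter hU) fun y hy => by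
          rw [hy.1.iSup_norm]
    _ = ∫⁻ ω in Y ⁻¹' {y | InfargmaxAt y 0}, H (‖Y ω 0‖⁻¹ • Y ω) ∂P :=
        (setLIntegral_comp_of_map_eq_restrict hY hYlaw (measurableSet_infargmaxAt 0)
          (hH.comp (measurable_inv_norm_smul 0))).symm
    _ = ∫⁻ ω in {ω | InfargmaxAt (Θ ω) 0}, H (Θ ω) ∂P := by
        have hset : Y ⁻¹' {y | InfargmaxAt y 0} = {ω | InfargmaxAt (Θ ω) 0} := by
          ext ω
          simp only [mem_preimage, mem_ofPred_eq, hΘdef, infargmaxAt_inv_norm_smul]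
        rw [hset]
        exact lintegral_congr fun ω => by rw [hΘdef]

end TailProcess

theorem statement14_general
    -- `V` plays the role of `ℝ^d` (`d ≥ 1`) equipped with an arbitrary norm
    {V : Type*} [NormedAddCommGroup V] [NormedSpace ℝ V]
    [MeasurableSpace V] [BorelSpace V]
    (α : ℝ) (hα : 0 < α)
    -- the tail measure and its properties
    (ν : Measure (ℤ → V))
    (hνshift : ν.map (backshift 1) = ν)
    -- the tail process `Y` and the spectral tail process `Θ`
    {Ω : Type*} [MeasurableSpace Ω] (P : Measure Ω) [IsProbabilityMeasure P]
    (Y : Ω → ℤ → V) (hYmeas : Measurable Y)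
    (hYlaw : P.map Y = ν.restrict {y : ℤ → V | 1 < ‖y 0‖})
    (Θ : Ω → ℤ → V) (hΘdef : ∀ ω, Θ ω = ‖Y ω 0‖⁻¹ • Y ω)
    (hpolar : ∀ H : (ℤ → V) → ℝ≥0∞, Measurable H →
      ∫⁻ y in {y : ℤ → V | y 0 ≠ 0}, H y ∂ν
        = ∫⁻ r in Ioi (0 : ℝ),
            (∫⁻ ω, H (r • Θ ω) ∂P) * ENNReal.ofReal (α * r ^ (-α - 1)))
    -- `Q`: a random element (on a probability space `Ω'`) whose law is that of
    -- `Y/Y*`, `Y* = sup_{j∈ℤ} ‖Y_j‖`, conditionally on `{sup_{j≤−1} ‖Y_j‖ ≤ 1}`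
    {Ω' : Type*} [MeasurableSpace Ω'] (P' : Measure Ω') [IsProbabilityMeasure P']
    (Q : Ω' → ℤ → V) (hQmeas : Measurable Q)
    (hQlaw : P'.map Q
      = (ProbabilityTheory.cond P {ω | ∀ j : ℤ, j ≤ -1 → ‖Y ω j‖ ≤ 1}).map
          (fun ω => (⨆ j : ℤ, ‖Y ω j‖)⁻¹ • Y ω))
    -- the statement
    (hY0 : P {ω | Tendsto (fun k : ℤ => ‖Y ω k‖) cofinite (𝓝 0)} = 1)
    (H : (ℤ → V) → ℝ≥0∞) (hH : Measurable H)
    (hHshift : ∀ x, H (backshift 1 x) = H x)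
    (hHhom : ∀ t : ℝ, 0 < t → ∀ x, H (t • x) = ENNReal.ofReal (t ^ α) * H x) :
    (P {ω | ∀ j : ℤ, 1 ≤ j → ‖Y ω j‖ ≤ 1} * ∫⁻ ω', H (Q ω') ∂P'
        = ∫⁻ ω in {ω | InfargmaxAt (Θ ω) 0}, H (Θ ω) ∂P) ∧
      (∫⁻ ω in {ω | InfargmaxAt (Θ ω) 0}, H (Θ ω) ∂P
        = ∫⁻ ω, H (Θ ω) / (∑' j : ℤ, (‖Θ ω j‖₊ : ℝ≥0∞) ^ α) ∂P) ∧
      ((∫⁻ ω', H (Q ω') ∂P' ≠ ∞) ↔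
        ∫⁻ ω in {ω | InfargmaxAt (Θ ω) 0}, H (Θ ω) ∂P ≠ ∞) ∧
      ((∫⁻ ω in {ω | InfargmaxAt (Θ ω) 0}, H (Θ ω) ∂P ≠ ∞) ↔
        ∫⁻ ω, H (Θ ω) / (∑' j : ℤ, (‖Θ ω j‖₊ : ℝ≥0∞) ^ α) ∂P ≠ ∞) := by
  have hΘ : Measurable Θ := funext hΘdef ▸ (measurable_inv_norm_smul 0).comp hYmeas
  have hΘ0 := ae_norm_apply_zero_eq_one hYmeas hYlaw hΘdef
  have hΘZ := ae_tendsto_norm_of_measure_eq_one hYmeas hY0 hΘdef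
  have hΘI : ∀ᵐ ω ∂P, ∃ j, InfargmaxAt (Θ ω) j := (hΘZ.and hΘ0).mono fun ω h =>
    exists_infargmaxAt h.1 fun h0 => by simp [h0] at h
  have hνZ := HasPolarDecomposition.ae_of_ae hpolar measurableSet_setOf_tendsto_norm_cofinite
    (fun r _ _ => tendsto_norm_const_smul_apply r) hΘZ
  have hν := measurePreserving_backshift ⟨measurable_backshift 1, hνshift⟩
  have hHs := apply_backshift_of_apply_backshift_one hHshift
  have hϑ := measure_forall_pos_norm_le_one_eq_forall_neg hν hνZ hYmeas hYlaw
  have h1 : P {ω | ∀ j : ℤ, 1 ≤ j → ‖Y ω j‖ ≤ 1} * ∫⁻ ω', H (Q ω') ∂P'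
      = ∫⁻ ω in {ω | InfargmaxAt (Θ ω) 0}, H (Θ ω) ∂P := by
    rw [hϑ, measure_mul_lintegral_of_map_eq_map_cond hQmeas
      (measurable_inv_iSup_norm_smul.comp hYmeas) hQlaw hH]
    exact setLIntegral_inv_iSup_smul_eq_setLIntegral_infargmaxAt hν hνZ hYmeas hYlaw hΘdef hH hHs
  have h2 := (HasPolarDecomposition.satisfiesTimeChange hpolar hα hΘ hν hΘ0
    ).setLIntegral_infargmaxAt_eq_lintegral_div hΘ hΘI hH hHhom hHs
  have hϑ0 : P {ω | ∀ j : ℤ, 1 ≤ j → ‖Y ω j‖ ≤ 1} ≠ 0 :=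
    hϑ ▸ measure_ne_zero_of_map_eq_map_cond hQmeas hQlaw
  refine ⟨h1, h2, ?_, by rw [h2]⟩
  rw [← h1, ne_eq, ne_eq, ENNReal.mul_eq_top]
  simp [hϑ0, measure_ne_top]

/-- **Identities for shift invariant α-homogeneous functionals.**
If `P(lim_{|j|→∞} ‖Y_j‖ = 0) = 1` and `H` is a nonnegative, shift invariant,
`α`-homogeneous measurable function on `E`, then
`ϑ·E[H(Q)] = E[H(Θ) 1{I(Θ)=0}] = E[H(Θ)/Σ_{j∈ℤ}‖Θ_j‖^α]`; in particular the three
expectations are simultaneously finite or infinite. -/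
theorem statement14
    -- `V` plays the role of `ℝ^d` (`d ≥ 1`) equipped with an arbitrary norm
    {V : Type*} [NormedAddCommGroup V] [NormedSpace ℝ V] [FiniteDimensional ℝ V]
    [Nontrivial V] [MeasurableSpace V] [BorelSpace V]
    (α : ℝ) (hα : 0 < α)
    -- the tail measure and its properties
    (ν : Measure (ℤ → V))
    (hν0 : ν {0} = 0)
    (hν1 : ν {y : ℤ → V | 1 < ‖y 0‖} = 1)
    (hνshift : ν.map (backshift 1) = ν)
    (hνhom : ∀ A : Set (ℤ → V), MeasurableSet A → ∀ c : ℝ, 0 < c →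
      ν ((fun x => c • x) '' A) = ENNReal.ofReal (c ^ (-α)) * ν A)
    -- the tail process `Y` and the spectral tail process `Θ`
    {Ω : Type*} [MeasurableSpace Ω] (P : Measure Ω) [IsProbabilityMeasure P]
    (Y : Ω → ℤ → V) (hYmeas : Measurable Y)
    (hYlaw : P.map Y = ν.restrict {y : ℤ → V | 1 < ‖y 0‖})
    (Θ : Ω → ℤ → V) (hΘdef : ∀ ω, Θ ω = ‖Y ω 0‖⁻¹ • Y ω)
    (hPareto : ∀ u : ℝ, 1 ≤ u → P {ω | u < ‖Y ω 0‖} = ENNReal.ofReal (u ^ (-α)))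
    (hindep : IndepFun (fun ω => ‖Y ω 0‖) Θ P)
    (hpolar : ∀ H : (ℤ → V) → ℝ≥0∞, Measurable H →
      ∫⁻ y in {y : ℤ → V | y 0 ≠ 0}, H y ∂ν
        = ∫⁻ r in Ioi (0 : ℝ),
            (∫⁻ ω, H (r • Θ ω) ∂P) * ENNReal.ofReal (α * r ^ (-α - 1)))
    -- `Q`: a random element (on a probability space `Ω'`) whose law is that of
    -- `Y/Y*`, `Y* = sup_{j∈ℤ} ‖Y_j‖`, conditionally on `{sup_{j≤−1} ‖Y_j‖ ≤ 1}`
    {Ω' : Type*} [MeasurableSpace Ω'] (P' : Measure Ω') [IsProbabilityMeasure P']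
    (Q : Ω' → ℤ → V) (hQmeas : Measurable Q)
    (hQlaw : P'.map Q
      = (ProbabilityTheory.cond P {ω | ∀ j : ℤ, j ≤ -1 → ‖Y ω j‖ ≤ 1}).map
          (fun ω => (⨆ j : ℤ, ‖Y ω j‖)⁻¹ • Y ω))
    -- the statement
    (hY0 : P {ω | Tendsto (fun k : ℤ => ‖Y ω k‖) cofinite (𝓝 0)} = 1)
    (H : (ℤ → V) → ℝ≥0∞) (hH : Measurable H)
    (hHshift : ∀ x, H (backshift 1 x) = H x)
    (hHhom : ∀ t : ℝ, 0 < t → ∀ x, H (t • x) = ENNReal.ofReal (t ^ α) * H x) :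
    (P {ω | ∀ j : ℤ, 1 ≤ j → ‖Y ω j‖ ≤ 1} * ∫⁻ ω', H (Q ω') ∂P'
        = ∫⁻ ω in {ω | InfargmaxAt (Θ ω) 0}, H (Θ ω) ∂P) ∧
      (∫⁻ ω in {ω | InfargmaxAt (Θ ω) 0}, H (Θ ω) ∂P
        = ∫⁻ ω, H (Θ ω) / (∑' j : ℤ, (‖Θ ω j‖₊ : ℝ≥0∞) ^ α) ∂P) ∧
      ((∫⁻ ω', H (Q ω') ∂P' ≠ ∞) ↔
        ∫⁻ ω in {ω | InfargmaxAt (Θ ω) 0}, H (Θ ω) ∂P ≠ ∞) ∧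
      ((∫⁻ ω in {ω | InfargmaxAt (Θ ω) 0}, H (Θ ω) ∂P ≠ ∞) ↔
        ∫⁻ ω, H (Θ ω) / (∑' j : ℤ, (‖Θ ω j‖₊ : ℝ≥0∞) ^ α) ∂P ≠ ∞) :=
  statement14_general α hα ν hνshift P Y hYmeas hYlaw Θ hΘdef hpolar P' Q hQmeas hQlaw hY0 H hH
    hHshift hHhom
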